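/- Let p̃, p̃₀, p̃₁ ∈ [0, 1/2], let x̄ ∈ (0, 1/2), let a ∈ {0, 1} and b = 1 − a, and suppose p̃ * p̃_a ≥ p̃_b and p̃ * p̃_a < 1/2. Then (1 − 2(p̃ * p̃_a)) / [ (p̃ * p̃_a * x̄)(1 − p̃ * p̃_a * x̄) · log((1 − p̃ * p̃_a * x̄)/(p̃ * p̃_a * x̄)) ] ≤ (1 − 2p̃_b) / [ (p̃_b * x̄)(1 − p̃_b * x̄) · log((1 − p̃_b * x̄)/(p̃_b * x̄)) ]. -/
import Mathlib


/-- The star operation `p * x = p(1−x) + (1−p)x`. -/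
noncomputable def pstar (p x : ℝ) : ℝ := p * (1 - x) + (1 - p) * x

/-- `l(p̂) = (1 − 2p̂) / [ (p̂ * x̄)(1 − p̂ * x̄) · log₂((1 − p̂ * x̄)/(p̂ * x̄)) ]`. -/
noncomputable def lfun (xb ph : ℝ) : ℝ :=
  (1 - 2 * ph) /
    (pstar ph xb * (1 - pstar ph xb) * Real.logb 2 ((1 - pstar ph xb) / pstar ph xb))

open Real Set

/-- `sinh s ≤ s * cosh s` for `s ≥ 0`. -/
lemma sinh_le_mul_cosh {s : ℝ} (hs : 0 ≤ s) : Real.sinh s ≤ s * Real.cosh s := by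
  have hmono : MonotoneOn (fun x => x * Real.cosh x - Real.sinh x) (Ici (0:ℝ)) := by
    apply monotoneOn_of_deriv_nonneg (convex_Ici 0)
    · exact ((continuous_id.mul Real.continuous_cosh).sub Real.continuous_sinh).continuousOn
    · exact fun x hx => ((differentiableAt_id.mul Real.differentiable_cosh.differentiableAt).sub
        Real.differentiable_sinh.differentiableAt).differentiableWithinAt
    · intro x hx
      rw [interior_Ici, mem_Ioi] at hx
      have hd : HasDerivAt (fun x => x * Real.cosh x - Real.sinh x)
          (1 * Real.cosh x + x * Real.sinh x - Real.cosh x) x :=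
        ((hasDerivAt_id x).mul (Real.hasDerivAt_cosh x)).sub (Real.hasDerivAt_sinh x)
      rw [hd.deriv]
      have := Real.sinh_nonneg_iff.2 hx.le
      nlinarith
  have := hmono (self_mem_Ici) (mem_Ici.2 hs) hs
  simpa using this

/-- `sinh s / s` is monotone: for `0 < b ≤ a`, `a * sinh b ≤ b * sinh a`. -/
lemma mul_sinh_le {a b : ℝ} (hb : 0 < b) (hba : b ≤ a) :
    a * Real.sinh b ≤ b * Real.sinh a := by
  have hmono : MonotoneOn (fun s => b * Real.sinh s - s * Real.sinh b) (Ici b) := by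
    apply monotoneOn_of_deriv_nonneg (convex_Ici b)
    · exact ((continuous_const.mul Real.continuous_sinh).sub
        (continuous_id.mul continuous_const)).continuousOn
    · exact fun x hx => (((Real.differentiable_sinh.differentiableAt).const_mul b).sub
        (differentiableAt_id.mul (differentiableAt_const _))).differentiableWithinAt
    · intro x hx
      rw [interior_Ici, mem_Ioi] at hx
      have hd : HasDerivAt (fun s => b * Real.sinh s - s * Real.sinh b)
          (b * Real.cosh x - 1 * Real.sinh b) x :=
        ((Real.hasDerivAt_sinh x).const_mul b).sub ((hasDerivAt_id x).mul_const (Real.sinh b))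
      rw [hd.deriv, one_mul, sub_nonneg]
      calc Real.sinh b ≤ b * Real.cosh b := sinh_le_mul_cosh hb.le
        _ ≤ b * Real.cosh x := by
            apply mul_le_mul_of_nonneg_left _ hb.le
            exact Real.cosh_strictMonoOn.monotoneOn (mem_Ici.2 hb.le)
              (mem_Ici.2 (hb.le.trans hx.le)) hx.le
  have := hmono (self_mem_Ici) (mem_Ici.2 hba) hba
  simp only [sub_self] at this
  linarith

/-- `(t - t⁻¹)/log t` is monotone on `(1, ∞)`. -/
lemma hfun_mono {u v : ℝ} (hu : 1 < u) (huv : u ≤ v) :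
    (u - u⁻¹) / Real.log u ≤ (v - v⁻¹) / Real.log v := by
  have hlu : 0 < Real.log u := Real.log_pos hu
  have hlv : 0 < Real.log v := Real.log_pos (hu.trans_le huv)
  have hsu : u - u⁻¹ = 2 * Real.sinh (Real.log u) := by
    rw [Real.sinh_log (by linarith)]; ring
  have hsv : v - v⁻¹ = 2 * Real.sinh (Real.log v) := by
    rw [Real.sinh_log (by linarith)]; ring
  rw [hsu, hsv, div_le_div_iff₀ hlu hlv]
  have := mul_sinh_le hlu (Real.log_le_log (by linarith) huv)
  nlinarith

/-- Key inequality in terms of `y`. -/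
lemma key {y1 y2 : ℝ} (hy2 : 0 < y2) (h21 : y2 ≤ y1) (hy1 : y1 < 1/2) :
    (1 - 2*y1) / (y1 * (1 - y1) * Real.log ((1 - y1)/y1))
      ≤ (1 - 2*y2) / (y2 * (1 - y2) * Real.log ((1 - y2)/y2)) := by
  have hy1pos : 0 < y1 := hy2.trans_le h21
  have hy2' : y2 < 1/2 := lt_of_le_of_lt h21 hy1
  set t1 := (1 - y1)/y1 with ht1def
  set t2 := (1 - y2)/y2 with ht2def
  have ht1 : 1 < t1 := (one_lt_div hy1pos).2 (by linarith)
  have ht2 : t1 ≤ t2 := by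
    rw [ht1def, ht2def, div_le_div_iff₀ hy1pos hy2]
    nlinarith
  have e1 : (1 - 2*y1) / (y1 * (1 - y1) * Real.log t1) = (t1 - t1⁻¹) / Real.log t1 := by
    have hy1ne : y1 ≠ 0 := hy1pos.ne'
    have hy1ne' : (1:ℝ) - y1 ≠ 0 := by linarith
    have : t1 - t1⁻¹ = (1 - 2*y1) / (y1 * (1 - y1)) := by
      rw [ht1def, inv_div]
      field_simp
      ring
    rw [this]
    rw [div_div]
  have e2 : (1 - 2*y2) / (y2 * (1 - y2) * Real.log t2) = (t2 - t2⁻¹) / Real.log t2 := by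
    have hy2ne : y2 ≠ 0 := hy2.ne'
    have hy2ne' : (1:ℝ) - y2 ≠ 0 := by linarith
    have : t2 - t2⁻¹ = (1 - 2*y2) / (y2 * (1 - y2)) := by
      rw [ht2def, inv_div]
      field_simp
      ring
    rw [this, div_div]
  rw [e1, e2]
  exact hfun_mono ht1 ht2

lemma lfun_eq {xb q : ℝ} (hx0 : 0 < xb) (hx1 : xb < 1/2)
    (hq0 : 0 ≤ q) (hq1 : q < 1/2) :
    lfun xb q = (Real.log 2 / (1 - 2*xb)) *
      ((1 - 2*pstar q xb) /
        (pstar q xb * (1 - pstar q xb) * Real.log ((1 - pstar q xb)/(pstar q xb)))) := by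
  have hyval : pstar q xb = xb + q*(1 - 2*xb) := by unfold pstar; ring
  set y := pstar q xb with hy
  have hy0 : 0 < y := by rw [hyval]; nlinarith
  have hy1 : y < 1/2 := by rw [hyval]; nlinarith
  have hrel : 1 - 2*y = (1 - 2*q)*(1 - 2*xb) := by rw [hyval]; ring
  have hyne : y ≠ 0 := hy0.ne'
  have hyne' : (1:ℝ) - y ≠ 0 := by linarith
  have ht : 1 < (1 - y)/y := (one_lt_div hy0).2 (by linarith)
  have hlt : 0 < Real.log ((1 - y)/y) := Real.log_pos ht
  have hl2 : 0 < Real.log 2 := Real.log_pos (by norm_num)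
  have hxb : (1:ℝ) - 2*xb ≠ 0 := by linarith
  have hq : 1 - 2*q = (1 - 2*y)/(1 - 2*xb) := by
    rw [eq_div_iff hxb, hrel]
  unfold lfun
  rw [← hy, Real.logb, hq]
  field_simp

/-- Let `p̃, p̃₀, p̃₁ ∈ [0, 1/2]`, `x̄ ∈ (0, 1/2)`, `a ∈ {0,1}`, `b = 1 − a`, and suppose
`p̃ * p̃_a ≥ p̃_b` and `p̃ * p̃_a < 1/2`. Then
`(1 − 2(p̃ * p̃_a)) / [ (p̃ * p̃_a * x̄)(1 − p̃ * p̃_a * x̄) · log((1 − p̃ * p̃_a * x̄)/(p̃ * p̃_a * x̄)) ]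
  ≤ (1 − 2p̃_b) / [ (p̃_b * x̄)(1 − p̃_b * x̄) · log((1 − p̃_b * x̄)/(p̃_b * x̄)) ]`. -/
theorem stmt6 (pt : ℝ) (p : Fin 2 → ℝ) (xb : ℝ)
    (hpt : pt ∈ Set.Icc (0 : ℝ) (1 / 2)) (hp : ∀ i, p i ∈ Set.Icc (0 : ℝ) (1 / 2))
    (hx : xb ∈ Set.Ioo (0 : ℝ) (1 / 2)) (a : Fin 2)
    (h1 : pstar pt (p a) ≥ p (1 - a)) (h2 : pstar pt (p a) < 1 / 2) :
    lfun xb (pstar pt (p a)) ≤ lfun xb (p (1 - a)) := by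
  obtain ⟨hx0, hx1⟩ := hx
  obtain ⟨hq20, hq21⟩ := hp (1 - a)
  set q1 := pstar pt (p a) with hq1def
  set q2 := p (1 - a) with hq2def
  have hq10 : 0 ≤ q1 := le_trans hq20 h1
  have hy1val : pstar q1 xb = xb + q1*(1 - 2*xb) := by unfold pstar; ring
  have hy2val : pstar q2 xb = xb + q2*(1 - 2*xb) := by unfold pstar; ring
  have hy20 : 0 < pstar q2 xb := by rw [hy2val]; nlinarith
  have hy21 : pstar q2 xb ≤ pstar q1 xb := by rw [hy1val, hy2val]; nlinarith
  have hy1lt : pstar q1 xb < 1/2 := by rw [hy1val]; nlinarith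
  rw [lfun_eq hx0 hx1 hq10 h2, lfun_eq hx0 hx1 hq20 (lt_of_le_of_lt h1 h2)]
  have hl2 : 0 < Real.log 2 := Real.log_pos (by norm_num)
  have hxb : (0:ℝ) < 1 - 2*xb := by linarith
  apply mul_le_mul_of_nonneg_left _ (le_of_lt (div_pos hl2 hxb))
  exact key hy20 hy21 hy1lt
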